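/- Let G be a connected undirected graph with positive edge weights ω, and let x₀, x₁ be two vertices. If every vertex u with d^ω(u,x₀) ≤ d^ω(u,x₁) is assigned label 0 and every other vertex label 1, then the subgraph induced by the label-0 vertices is connected. -/
import Mathlib

open SimpleGraph

/-- The weight of a walk: the sum of the weights of its edges. -/
noncomputable def walkWeight {V : Type} (w : V → V → ℝ) {G : SimpleGraph V}
    {u v : V} (p : G.Walk u v) : ℝ :=
  (p.darts.map fun d => w d.toProd.1 d.toProd.2).sum

/-- The shortest-path (minimum-weight walk) distance. -/
noncomputable def dw {V : Type} (w : V → V → ℝ) (G : SimpleGraph V) (u v : V) : ℝ :=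
  sInf {x | ∃ p : G.Walk u v, walkWeight w p = x}

section Aux

variable {V : Type} [DecidableEq V] {G : SimpleGraph V} {w : V → V → ℝ}

lemma walkWeight_nonneg (hpos : ∀ u v, G.Adj u v → 0 < w u v) {u v : V} (p : G.Walk u v) :
    0 ≤ walkWeight w p := by
  unfold walkWeight
  apply List.sum_nonneg
  intro x hx
  simp only [List.mem_map] at hx
  obtain ⟨d, _, rfl⟩ := hx
  exact (hpos _ _ d.adj).le

lemma walkWeight_nil {u : V} : walkWeight w (Walk.nil : G.Walk u u) = 0 := rfl

lemma walkWeight_cons {u v x : V} (h : G.Adj u v) (p : G.Walk v x) :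
    walkWeight w (Walk.cons h p) = w u v + walkWeight w p := by
  simp [walkWeight]

lemma walkWeight_append {u v x : V} (p : G.Walk u v) (q : G.Walk v x) :
    walkWeight w (p.append q) = walkWeight w p + walkWeight w q := by
  simp [walkWeight, Walk.darts_append]

lemma walkWeight_dropUntil_le (hpos : ∀ u v, G.Adj u v → 0 < w u v)
    {u v x : V} (p : G.Walk u v) (h : x ∈ p.support) :
    walkWeight w (p.dropUntil x h) ≤ walkWeight w p := by
  have := p.take_spec h
  have h2 : walkWeight w ((p.takeUntil x h).append (p.dropUntil x h)) = walkWeight w p := by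
    rw [this]
  rw [walkWeight_append] at h2
  have := walkWeight_nonneg hpos (p.takeUntil x h)
  linarith

lemma walkWeight_bypass_le (hpos : ∀ u v, G.Adj u v → 0 < w u v)
    {u v : V} (p : G.Walk u v) : walkWeight w p.bypass ≤ walkWeight w p := by
  induction p with
  | nil => simp [Walk.bypass]
  | cons h p ih =>
    rw [Walk.bypass]
    split_ifs with hs
    · calc walkWeight w (p.bypass.dropUntil _ hs) ≤ walkWeight w p.bypass :=
            walkWeight_dropUntil_le hpos _ _
        _ ≤ walkWeight w p := ih
        _ ≤ walkWeight w (Walk.cons h p) := by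
            rw [walkWeight_cons]; linarith [(hpos _ _ h).le]
    · rw [walkWeight_cons, walkWeight_cons]; linarith

lemma dw_bddBelow (hpos : ∀ u v, G.Adj u v → 0 < w u v) (u v : V) : BddBelow {x | ∃ p : G.Walk u v, walkWeight w p = x} :=
  ⟨0, by rintro x ⟨p, rfl⟩; exact walkWeight_nonneg hpos p⟩

lemma dw_le_walk (hpos : ∀ u v, G.Adj u v → 0 < w u v) {u v : V} (p : G.Walk u v) : dw w G u v ≤ walkWeight w p :=
  csInf_le (dw_bddBelow hpos u v) ⟨p, rfl⟩

lemma dw_nonneg (hpos : ∀ u v, G.Adj u v → 0 < w u v) {u v : V} (h : G.Reachable u v) : 0 ≤ dw w G u v := by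
  obtain ⟨p⟩ := h
  exact le_csInf ⟨_, p, rfl⟩ (by rintro x ⟨q, rfl⟩; exact walkWeight_nonneg hpos q)

/-- The infimum is attained by some walk. -/
lemma dw_exists [Fintype V] (hpos : ∀ u v, G.Adj u v → 0 < w u v) {u v : V} (h : G.Reachable u v) :
    ∃ p : G.Walk u v, walkWeight w p = dw w G u v := by
  classical
  obtain ⟨q⟩ := h
  have : DecidableEq V := Classical.decEq V
  have : DecidableRel G.Adj := Classical.decRel _
  set T : Finset ℝ := Finset.univ.image (fun p : G.Path u v => walkWeight w p.val) with hT
  have hTne : T.Nonempty := ⟨walkWeight w q.bypass.toPath.val,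
    Finset.mem_image.2 ⟨q.bypass.toPath, Finset.mem_univ _, rfl⟩⟩
  obtain ⟨p, -, hp⟩ := Finset.mem_image.1 (T.min'_mem hTne)
  refine ⟨p.val, le_antisymm ?_ (dw_le_walk hpos _)⟩
  rw [hp]
  refine le_csInf ⟨_, q, rfl⟩ ?_
  rintro x ⟨r, rfl⟩
  calc T.min' hTne ≤ walkWeight w r.toPath.val :=
        T.min'_le _ (Finset.mem_image.2 ⟨r.toPath, Finset.mem_univ _, rfl⟩)
    _ ≤ walkWeight w r := walkWeight_bypass_le hpos r

lemma reachable_induce {s : Set V} {a b : V} (p : G.Walk a b)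
    (hp : ∀ x ∈ p.support, x ∈ s) :
    (G.induce s).Reachable ⟨a, hp a p.start_mem_support⟩ ⟨b, hp b p.end_mem_support⟩ := by
  induction p with
  | nil => exact Reachable.refl _
  | cons h q ih =>
    have hr := ih (fun x hx => hp x (by simp [Walk.support_cons, hx]))
    refine Reachable.trans ?_ hr
    exact Adj.reachable (by simpa using h)

end Aux

/-- The label-0 class of the landmark bipartition induces a connected subgraph. -/
theorem stmt_0 {V : Type} [Fintype V] (G : SimpleGraph V) (w : V → V → ℝ)
    (hsymm : ∀ u v, w u v = w v u) (hpos : ∀ u v, G.Adj u v → 0 < w u v)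
    (hconn : G.Connected) (x₀ x₁ : V) :
    (G.induce {u | dw w G u x₀ ≤ dw w G u x₁}).Connected := by
  classical
  set s : Set V := {u | dw w G u x₀ ≤ dw w G u x₁} with hs
  have hx₀ : x₀ ∈ s := by
    have h1 : dw w G x₀ x₀ ≤ 0 := by
      have := dw_le_walk (w := w) hpos (Walk.nil : G.Walk x₀ x₀)
      simpa [walkWeight_nil] using this
    have h2 : (0:ℝ) ≤ dw w G x₀ x₁ := dw_nonneg hpos (hconn.preconnected x₀ x₁)
    exact le_trans h1 h2
  -- every vertex of s is reachable from x₀ within s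
  have key : ∀ a ∈ s, ∃ (p : G.Walk a x₀), ∀ x ∈ p.support, x ∈ s := by
    intro a ha
    obtain ⟨p, hpw⟩ := dw_exists (w := w) hpos (hconn.preconnected a x₀)
    refine ⟨p, fun v hv => ?_⟩
    by_contra hvs
    have hv1 : dw w G v x₁ < dw w G v x₀ := by
      simp only [hs, Set.mem_setOf_eq, not_le] at hvs
      exact hvs
    set q := p.takeUntil v hv with hq
    set r := p.dropUntil v hv with hr
    have hsplit : walkWeight w q + walkWeight w r = walkWeight w p := by
      rw [← walkWeight_append, hq, hr, p.take_spec hv]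
    have h3 : dw w G v x₀ ≤ walkWeight w r := dw_le_walk hpos r
    -- subadditivity: dw a x₁ ≤ wt q + dw v x₁
    obtain ⟨r', hr'⟩ := dw_exists (w := w) hpos (hconn.preconnected v x₁)
    have h4 : dw w G a x₁ ≤ walkWeight w q + dw w G v x₁ := by
      have := dw_le_walk (w := w) hpos (q.append r')
      rw [walkWeight_append, hr'] at this
      exact this
    have ha' : dw w G a x₀ ≤ dw w G a x₁ := ha
    rw [← hpw, ← hsplit] at ha'
    linarith
  haveI : Nonempty s := ⟨⟨x₀, hx₀⟩⟩
  apply Connected.mk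
  rintro ⟨a, ha⟩ ⟨b, hb⟩
  obtain ⟨p, hp⟩ := key a ha
  obtain ⟨p', hp'⟩ := key b hb
  have r1 := reachable_induce (s := s) p hp
  have r2 := reachable_induce (s := s) p' hp'
  exact Reachable.trans r1 r2.symm
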